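/- Let P(ω, k) be a monic polynomial in ω of degree n whose coefficients are real-analytic functions of k ∈ ℝ, and suppose that for every k all roots of P(·, k) are real and uniformly bounded. If ω(k) is a continuous branch of roots with ω(k) ≥ 0 for all k and ω(k₀) = 0, and ω(k) admits a convergent Puiseux series expansion ω(k) = Σ_{m≥m₀} c_m (k−k₀)^{m/q} near k₀, then all exponents m/q appearing with c_m ≠ 0 are nonnegative integers; hence ω is analytic at k₀, and combined with nonnegativity, ω(k) = O((k−k₀)²). -/

import Mathlib

open Complex


open Complex Filter

namespace Stmt11Helpers



lemma summable_of_norm_summable (e : ℕ → ℂ) {s₀ s : ℝ} (hs : 0 ≤ s) (hss : s ≤ s₀)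
    (hA : Summable fun i => ‖e i‖ * s₀ ^ i) :
    Summable fun i => e i * (s : ℂ) ^ i := by
  rw [← summable_norm_iff]
  apply hA.of_nonneg_of_le (fun i => norm_nonneg _)
  intro i
  rw [norm_mul, norm_pow, Complex.norm_real, Real.norm_eq_abs, _root_.abs_of_nonneg hs]
  exact mul_le_mul_of_nonneg_left (pow_le_pow_left₀ hs hss i) (norm_nonneg _)

lemma shift_summable_k (e : ℕ → ℂ) {s₀ : ℝ} (hs₀ : 0 < s₀) (k : ℕ)
    (hA : Summable fun i => ‖e i‖ * s₀ ^ i) :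
    Summable fun i => ‖e (i + k)‖ * s₀ ^ i := by
  have h := ((summable_nat_add_iff k).2 hA).mul_right (s₀⁻¹ ^ k)
  refine h.congr fun i => ?_
  rw [pow_add, mul_assoc, mul_assoc, ← mul_pow, mul_inv_cancel₀ hs₀.ne', one_pow, mul_one]

lemma norm_summable_of_summable (e : ℕ → ℂ) {s₀ : ℝ} (hs₀ : 0 ≤ s₀)
    (h : Summable fun i => e i * (s₀ : ℂ) ^ i) :
    Summable fun i => ‖e i‖ * s₀ ^ i := by
  have := (summable_norm_iff.2 h)
  convert this using 2 with i
  rw [norm_mul, norm_pow, Complex.norm_real, Real.norm_eq_abs, _root_.abs_of_nonneg hs₀]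

lemma head_tail (e : ℕ → ℂ) {s₀ : ℝ} (hs₀ : 0 < s₀)
    (hA : Summable fun i => ‖e i‖ * s₀ ^ i) :
    ∃ C : ℝ, 0 ≤ C ∧ ∀ s : ℝ, 0 < s → s ≤ s₀ →
      ‖(∑' i, e i * (s : ℂ) ^ i) - e 0‖ ≤ C * s := by
  have hAshift : Summable fun i => ‖e (i + 1)‖ * s₀ ^ i := shift_summable_k e hs₀ 1 hA
  refine ⟨∑' i, ‖e (i+1)‖ * s₀ ^ i, tsum_nonneg (fun i => by positivity), ?_⟩
  intro s hs hss
  have hsum : Summable fun i => e i * (s:ℂ)^i := summable_of_norm_summable e hs.le hss hA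
  have hsplit : ∑' i, e i * (s:ℂ)^i
      = e 0 + (s:ℂ) * ∑' i, e (i+1) * (s:ℂ)^i := by
    rw [Summable.tsum_eq_zero_add hsum]
    simp only [pow_zero, mul_one, pow_succ]
    rw [← tsum_mul_left]
    congr 1
    exact tsum_congr fun i => by ring
  rw [hsplit]
  have h1 : ‖(s:ℂ) * ∑' i, e (i+1) * (s:ℂ)^i‖ ≤ s * ∑' i, ‖e (i+1)‖ * s₀ ^ i := by
    rw [norm_mul, Complex.norm_real, Real.norm_eq_abs, _root_.abs_of_pos hs]
    apply mul_le_mul_of_nonneg_left _ hs.le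
    calc ‖∑' i, e (i+1) * (s:ℂ)^i‖ ≤ ∑' i, ‖e (i+1) * (s:ℂ)^i‖ :=
          norm_tsum_le_tsum_norm (by
            rw [summable_norm_iff]
            exact summable_of_norm_summable (fun i => e (i+1)) hs.le hss hAshift)
      _ ≤ ∑' i, ‖e (i+1)‖ * s₀ ^ i := by
          apply Summable.tsum_le_tsum _ (by rw [summable_norm_iff]; exact summable_of_norm_summable (fun i => e (i+1)) hs.le hss hAshift) hAshift
          intro i
          rw [norm_mul, norm_pow, Complex.norm_real, Real.norm_eq_abs, _root_.abs_of_pos hs]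
          exact mul_le_mul_of_nonneg_left (pow_le_pow_left₀ hs.le hss i) (norm_nonneg _)
  have h2 : e 0 + (s:ℂ) * (∑' i, e (i+1) * (s:ℂ)^i) - e 0 = (s:ℂ) * ∑' i, e (i+1) * (s:ℂ)^i := by
    ring
  rw [h2, mul_comm (∑' i, ‖e (i+1)‖ * s₀ ^ i) s]
  exact h1

lemma vanish_nat (e : ℕ → ℂ) {r B : ℝ} (hr : 0 < r) (hB : 0 ≤ B)
    (hA : ∀ s : ℝ, 0 < s → s < r → Summable fun i => e i * (s:ℂ)^i)
    (N : ℕ) (hbd : ∀ s : ℝ, 0 < s → s < r → ‖∑' i, e i * (s:ℂ)^i‖ ≤ B * s ^ N) :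
    ∀ i, i < N → e i = 0 := by
  intro i
  induction i using Nat.strong_induction_on with
  | _ i IH =>
  intro hiN
  have hzero : ∀ j, j < i → e j = 0 := fun j hj => IH j hj (hj.trans hiN)
  set s₀ : ℝ := r / 2 with hs₀def
  have hs₀ : 0 < s₀ := by positivity
  have hs₀r : s₀ < r := by rw [hs₀def]; linarith
  have hAn : Summable fun j => ‖e j‖ * s₀ ^ j :=
    norm_summable_of_summable e hs₀.le (hA s₀ hs₀ hs₀r)
  have hAn' : Summable fun j => ‖e (j + i)‖ * s₀ ^ j := shift_summable_k e hs₀ i hAn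
  obtain ⟨C, hC0, hC⟩ := head_tail (fun j => e (j + i)) hs₀ hAn'
  have key : ∀ s : ℝ, 0 < s → s ≤ min s₀ 1 → ‖e i‖ ≤ (B + C) * s := by
    intro s hs hsm
    have hss : s ≤ s₀ := le_trans hsm (min_le_left _ _)
    have hs1 : s ≤ 1 := le_trans hsm (min_le_right _ _)
    have hsr : s < r := lt_of_le_of_lt hss hs₀r
    have hsum := hA s hs hsr
    have hsplit : ∑' j, e j * (s:ℂ)^j = (s:ℂ)^i * ∑' j, e (j + i) * (s:ℂ)^j := by
      rw [← hsum.sum_add_tsum_nat_add i]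
      have h1 : ∑ j ∈ Finset.range i, e j * (s:ℂ)^j = 0 :=
        Finset.sum_eq_zero fun j hj => by rw [hzero j (Finset.mem_range.1 hj), zero_mul]
      rw [h1, zero_add, ← tsum_mul_left]
      exact tsum_congr fun j => by rw [pow_add]; ring
    have hnorm1 : ‖∑' j, e (j + i) * (s:ℂ)^j‖ ≤ B * s ^ (N - i) := by
      have h2 := hbd s hs hsr
      rw [hsplit, norm_mul, norm_pow, Complex.norm_real, Real.norm_eq_abs,
        _root_.abs_of_pos hs] at h2
      have h3 : s ^ N = s ^ i * s ^ (N - i) := by rw [← pow_add]; congr 1; omega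
      rw [h3, ← mul_assoc, mul_comm B (s ^ i), mul_assoc] at h2
      exact le_of_mul_le_mul_left h2 (by positivity)
    have htail := hC s hs hss
    simp only [zero_add] at htail
    have h5 : e i = (∑' j, e (j + i) * (s:ℂ)^j) - ((∑' j, e (j + i) * (s:ℂ)^j) - e i) := by ring
    have h6 : ‖e i‖ ≤ B * s ^ (N - i) + C * s := by
      calc ‖e i‖ = ‖(∑' j, e (j + i) * (s:ℂ)^j) - ((∑' j, e (j + i) * (s:ℂ)^j) - e i)‖ := by
            rw [← h5]
        _ ≤ ‖∑' j, e (j + i) * (s:ℂ)^j‖ + ‖(∑' j, e (j + i) * (s:ℂ)^j) - e i‖ := norm_sub_le _ _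
        _ ≤ B * s ^ (N - i) + C * s := add_le_add hnorm1 htail
    calc ‖e i‖ ≤ B * s ^ (N - i) + C * s := h6
      _ ≤ B * s + C * s := by
          gcongr
          calc s ^ (N - i) ≤ s ^ 1 := pow_le_pow_of_le_one hs.le hs1 (by omega)
            _ = s := pow_one s
      _ = (B + C) * s := by ring
  have hnorm0 : ‖e i‖ ≤ 0 := by
    by_contra h
    push_neg at h
    have hm : 0 < min s₀ 1 := lt_min hs₀ one_pos
    set s : ℝ := min (min s₀ 1) (‖e i‖ / (2 * (B + C + 1))) with hsdef
    have hs : 0 < s := lt_min hm (by positivity)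
    have h1 := key s hs (min_le_left _ _)
    have h2 : (B + C) * s ≤ (B + C + 1) * (‖e i‖ / (2 * (B + C + 1))) :=
      mul_le_mul (by linarith) (min_le_right _ _) hs.le (by positivity)
    have h3 : (B + C + 1) * (‖e i‖ / (2 * (B + C + 1))) = ‖e i‖ / 2 := by
      field_simp
    linarith
  exact norm_le_zero_iff.1 hnorm0



lemma int_shift_inj (m₀ : ℤ) : Function.Injective (fun i : ℕ => m₀ + (i : ℤ)) :=
  fun a b h => by simpa using h

lemma int_support (f : ℤ → ℂ) (m₀ : ℤ) (h : ∀ m, m < m₀ → f m = 0) :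
    Function.support f ⊆ Set.range (fun i : ℕ => m₀ + (i : ℤ)) := by
  intro m hm
  rcases lt_or_ge m m₀ with h' | h'
  · exact absurd (h m h') hm
  · exact ⟨(m - m₀).toNat, by simp [Int.toNat_of_nonneg (sub_nonneg.2 h')]⟩

lemma vanish_int (d : ℤ → ℂ) (m₀ : ℤ) (hsupp : ∀ m, m < m₀ → d m = 0)
    {r B : ℝ} (hr : 0 < r) (hB : 0 ≤ B) (p : ℤ)
    (hA : ∀ s : ℝ, 0 < s → s < r → Summable fun m : ℤ => d m * (s : ℂ) ^ m)
    (hbd : ∀ s : ℝ, 0 < s → s < r → ‖∑' m : ℤ, d m * (s : ℂ) ^ m‖ ≤ B * s ^ p) :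
    ∀ m, m < p → d m = 0 := by
  set m₁ : ℤ := min m₀ p with hm₁def
  have hsupp1 : ∀ m, m < m₁ → d m = 0 := fun m hm =>
    hsupp m (lt_of_lt_of_le hm (min_le_left _ _))
  set e : ℕ → ℂ := fun i => d (m₁ + i) with hedef
  set N : ℕ := (p - m₁).toNat with hNdef
  have hm₁p : m₁ ≤ p := min_le_right _ _
  have hNp : m₁ + N = p := by rw [hNdef]; omega
  -- reduction facts for each s
  have hred : ∀ s : ℝ, 0 < s → s < r →
      (Summable fun i : ℕ => e i * (s : ℂ) ^ i) ∧
      (∑' m : ℤ, d m * (s : ℂ) ^ m) = (s : ℂ) ^ m₁ * ∑' i : ℕ, e i * (s : ℂ) ^ i := by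
    intro s hs hsr
    have hsne : (s : ℂ) ≠ 0 := by exact_mod_cast ne_of_gt hs
    set f : ℤ → ℂ := fun m => d m * (s : ℂ) ^ m with hfdef
    have hfsupp : ∀ m, m < m₁ → f m = 0 := fun m hm => by
      simp [hfdef, hsupp1 m hm]
    have hcomp : ∀ i : ℕ, f (m₁ + i) = (s : ℂ) ^ m₁ * (e i * (s : ℂ) ^ i) := by
      intro i
      show d (m₁ + i) * (s : ℂ) ^ (m₁ + (i : ℤ)) = _
      rw [zpow_add₀ hsne, zpow_natCast]
      ring
    have hsumf := hA s hs hsr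
    have hvan : ∀ m ∉ Set.range (fun i : ℕ => m₁ + (i : ℤ)), f m = 0 := fun m hm => by
      by_contra hne
      exact hm (int_support f m₁ hfsupp hne)
    have hsum1 : Summable (f ∘ fun i : ℕ => m₁ + (i : ℤ)) :=
      ((int_shift_inj m₁).summable_iff hvan).2 hsumf
    have hsum2 : Summable fun i : ℕ => e i * (s : ℂ) ^ i := by
      have h' := hsum1.mul_left ((s : ℂ) ^ m₁)⁻¹
      refine h'.congr fun i => ?_
      show ((s : ℂ) ^ m₁)⁻¹ * f (m₁ + i) = e i * (s : ℂ) ^ i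
      rw [hcomp i, ← mul_assoc, inv_mul_cancel₀ (zpow_ne_zero _ hsne), one_mul]
    refine ⟨hsum2, ?_⟩
    have ht1 : ∑' i : ℕ, f (m₁ + (i : ℤ)) = ∑' m : ℤ, f m :=
      (int_shift_inj m₁).tsum_eq (int_support f m₁ hfsupp)
    rw [← ht1, tsum_congr hcomp, tsum_mul_left]
  intro m hmp
  rcases lt_or_ge m m₁ with hm | hm
  · exact hsupp1 m hm
  · have hi : m = m₁ + ((m - m₁).toNat : ℤ) := by omega
    have hiN : (m - m₁).toNat < N := by omega
    have := vanish_nat e hr hB (fun s hs hsr => (hred s hs hsr).1) N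
      (fun s hs hsr => by
        have h1 := hbd s hs hsr
        have h2 := (hred s hs hsr).2
        have hsne : (s : ℂ) ≠ 0 := by exact_mod_cast ne_of_gt hs
        rw [h2, norm_mul] at h1
        have h3 : ‖(s : ℂ) ^ m₁‖ = s ^ m₁ := by
          rw [norm_zpow, Complex.norm_real, Real.norm_eq_abs, _root_.abs_of_pos hs]
        rw [h3] at h1
        have h4 : (0:ℝ) < s ^ m₁ := zpow_pos hs _
        have h5 : B * s ^ p = s ^ m₁ * (B * s ^ N) := by
          rw [← hNp, zpow_add₀ (ne_of_gt hs), zpow_natCast]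
          ring
        rw [h5] at h1
        exact le_of_mul_le_mul_left (by rw [mul_comm (s ^ m₁)] at h1 ⊢; exact h1) h4)
      (m - m₁).toNat hiN
    rw [hi]
    exact this

lemma cpow_pos_eval {s : ℝ} (hs : 0 < s) {q : ℕ} (hq : 0 < q) (m : ℤ) :
    ((s ^ q : ℝ) : ℂ) ^ ((m : ℂ) / q) = (s : ℂ) ^ m := by
  have h1 : ((m : ℂ) / q) = (((m : ℝ) / q : ℝ) : ℂ) := by push_cast; ring
  rw [h1, ← Complex.ofReal_cpow (by positivity)]
  have h2 : (s ^ q : ℝ) ^ ((m : ℝ) / q : ℝ) = s ^ (m : ℝ) := by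
    rw [← Real.rpow_natCast s q, ← Real.rpow_mul hs.le]
    congr 1
    field_simp
  rw [h2, Real.rpow_intCast, Complex.ofReal_zpow]

lemma cpow_neg_eval {s : ℝ} (hs : 0 < s) {q : ℕ} (hq : 0 < q) (m : ℤ) :
    ((-(s ^ q) : ℝ) : ℂ) ^ ((m : ℂ) / q)
      = (Complex.exp ((Real.pi : ℂ) * Complex.I / q)) ^ m * (s : ℂ) ^ m := by
  have hpos : (0:ℝ) < s ^ q := pow_pos hs q
  have hneg : (-(s ^ q) : ℝ) < 0 := by linarith
  have hne : ((-(s ^ q) : ℝ) : ℂ) ≠ 0 := by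
    simp only [ne_eq, Complex.ofReal_eq_zero]
    exact ne_of_lt hneg
  have hlog : Complex.log ((-(s ^ q) : ℝ) : ℂ)
      = ((Real.log (s ^ q) : ℝ) : ℂ) + (Real.pi : ℂ) * Complex.I := by
    apply Complex.ext
    · rw [Complex.log_re]
      simp only [Complex.add_re, Complex.ofReal_re, Complex.mul_re, Complex.ofReal_im,
        Complex.I_re, Complex.I_im]
      rw [Complex.norm_real, Real.norm_eq_abs, abs_of_neg hneg, neg_neg]
      ring
    · rw [Complex.log_im]
      simp only [Complex.add_im, Complex.ofReal_im, Complex.mul_im, Complex.ofReal_re,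
        Complex.I_im, Complex.I_re]
      rw [Complex.arg_ofReal_of_neg hneg]
      ring
  rw [Complex.cpow_def_of_ne_zero hne, hlog]
  have hq' : (q : ℂ) ≠ 0 := by exact_mod_cast hq.ne'
  have hexp : (((Real.log (s ^ q) : ℝ) : ℂ) + (Real.pi : ℂ) * Complex.I) * ((m : ℂ) / q)
      = (m : ℂ) * ((Real.pi : ℂ) * Complex.I / q) + (m : ℂ) * ((Real.log s : ℝ) : ℂ) := by
    have hl : (Real.log (s ^ q) : ℝ) = (q : ℝ) * Real.log s := by
      rw [Real.log_pow]
    rw [hl]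
    push_cast
    field_simp
    ring
  rw [hexp, Complex.exp_add, Complex.exp_int_mul, Complex.exp_int_mul]
  congr 1
  rw [← Complex.ofReal_exp, Real.exp_log hs]

lemma exp_pow_eq_iff {q : ℕ} (hq : 0 < q) (m : ℤ)
    (h : (Complex.exp ((Real.pi : ℂ) * Complex.I / q)) ^ m
       = (Complex.exp (-((Real.pi : ℂ) * Complex.I / q))) ^ m) :
    (q : ℤ) ∣ m := by
  rw [← Complex.exp_int_mul, ← Complex.exp_int_mul,
    Complex.exp_eq_exp_iff_exists_int] at h
  obtain ⟨n, hn⟩ := h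
  have hq' : (q : ℂ) ≠ 0 := by exact_mod_cast hq.ne'
  have hπ : (Real.pi : ℂ) ≠ 0 := by exact_mod_cast Real.pi_ne_zero
  have hI : Complex.I ≠ 0 := Complex.I_ne_zero
  have h2 : (m : ℂ) * (2 * (Real.pi : ℂ) * Complex.I)
      = ((n * q : ℤ) : ℂ) * (2 * (Real.pi : ℂ) * Complex.I) := by
    field_simp at hn
    push_cast
    linear_combination (↑Real.pi * Complex.I) * hn
  have h3 : (m : ℂ) = ((n * q : ℤ) : ℂ) :=
    mul_right_cancel₀ (by simp [hπ, hI] : (2 * (Real.pi : ℂ) * Complex.I) ≠ 0) h2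
  have h4 : m = n * q := by exact_mod_cast h3
  exact ⟨n, by rw [h4, mul_comm]⟩


lemma r_summable_of_norm_summable (g : ℕ → ℝ) {s₀ t : ℝ} (ht : |t| ≤ s₀)
    (hA : Summable fun i => |g i| * s₀ ^ i) : Summable fun i => g i * t ^ i := by
  rw [← summable_abs_iff]
  apply hA.of_nonneg_of_le (fun i => abs_nonneg _)
  intro i
  rw [abs_mul, _root_.abs_pow]
  exact mul_le_mul_of_nonneg_left (pow_le_pow_left₀ (abs_nonneg t) ht i) (abs_nonneg _)

lemma r_shift (g : ℕ → ℝ) {s₀ : ℝ} (hs₀ : 0 < s₀) (k : ℕ)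
    (hA : Summable fun i => |g i| * s₀ ^ i) : Summable fun i => |g (i + k)| * s₀ ^ i := by
  have h := ((summable_nat_add_iff k).2 hA).mul_right (s₀⁻¹ ^ k)
  refine h.congr fun i => ?_
  rw [pow_add, mul_assoc, mul_assoc, ← mul_pow, mul_inv_cancel₀ hs₀.ne', one_pow, mul_one]

lemma head2 (g : ℕ → ℝ) {s₀ : ℝ} (hs₀ : 0 < s₀) (hA : Summable fun i => |g i| * s₀ ^ i) :
    ∃ C : ℝ, 0 ≤ C ∧ ∀ t : ℝ, |t| ≤ s₀ →
      |(∑' i, g i * t ^ i) - g 0 - g 1 * t| ≤ C * t ^ 2 := by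
  refine ⟨∑' i, |g (i + 2)| * s₀ ^ i, tsum_nonneg (fun i => by positivity), ?_⟩
  intro t ht
  have hsum : Summable fun i => g i * t ^ i := r_summable_of_norm_summable g ht hA
  have hsum1 : Summable fun i => g (i + 1) * t ^ i :=
    r_summable_of_norm_summable _ ht (r_shift g hs₀ 1 hA)
  have hsum2 : Summable fun i => g (i + 2) * t ^ i :=
    r_summable_of_norm_summable _ ht (r_shift g hs₀ 2 hA)
  have e1 : ∑' i, g i * t ^ i = g 0 + t * ∑' i, g (i + 1) * t ^ i := by
    rw [Summable.tsum_eq_zero_add hsum]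
    simp only [pow_zero, mul_one]
    congr 1
    rw [← tsum_mul_left]
    exact tsum_congr fun i => by rw [pow_succ]; ring
  have e2 : ∑' i, g (i + 1) * t ^ i = g 1 + t * ∑' i, g (i + 2) * t ^ i := by
    rw [Summable.tsum_eq_zero_add hsum1]
    simp only [pow_zero, mul_one]
    congr 1
    rw [← tsum_mul_left]
    apply tsum_congr
    intro i
    have : i + 1 + 1 = i + 2 := by omega
    rw [this, pow_succ]
    ring
  have e3 : (∑' i, g i * t ^ i) - g 0 - g 1 * t = t ^ 2 * ∑' i, g (i + 2) * t ^ i := by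
    rw [e1, e2]; ring
  rw [e3, abs_mul, _root_.abs_pow, _root_.sq_abs]
  rw [mul_comm (∑' i, |g (i + 2)| * s₀ ^ i) (t ^ 2)]
  apply mul_le_mul_of_nonneg_left _ (sq_nonneg t)
  calc |∑' i, g (i + 2) * t ^ i| ≤ ∑' i, |g (i + 2) * t ^ i| := by
        have h := norm_tsum_le_tsum_norm (f := fun i => g (i + 2) * t ^ i)
          (by rw [show (fun i => ‖g (i + 2) * t ^ i‖) = fun i => |g (i + 2) * t ^ i| from rfl,
                summable_abs_iff]; exact hsum2)
        simpa only [Real.norm_eq_abs] using h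
    _ ≤ ∑' i, |g (i + 2)| * s₀ ^ i := by
        apply Summable.tsum_le_tsum _ _ (r_shift g hs₀ 2 hA)
        · intro i
          rw [abs_mul, _root_.abs_pow]
          exact mul_le_mul_of_nonneg_left (pow_le_pow_left₀ (abs_nonneg t) ht i) (abs_nonneg _)
        · rw [summable_abs_iff]
          exact hsum2
  
lemma le_zero_of_le_mul {a C m : ℝ} (hm : 0 < m) (hC : 0 ≤ C)
    (h : ∀ t : ℝ, 0 < t → t ≤ m → a ≤ C * t) : a ≤ 0 := by
  by_contra hpos
  push_neg at hpos
  set t := min m (a / (2 * (C + 1))) with ht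
  have h1 : 0 < t := lt_min hm (by positivity)
  have h2 := h t h1 (min_le_left _ _)
  have h3 : C * t ≤ (C + 1) * (a / (2 * (C + 1))) :=
    mul_le_mul (by linarith) (min_le_right _ _) h1.le (by positivity)
  have h4 : (C + 1) * (a / (2 * (C + 1))) = a / 2 := by field_simp
  linarith


end Stmt11Helpers

set_option maxHeartbeats 1000000 in
open Stmt11Helpers in
/-- a nonnegative continuous root branch of a monic polynomial
with real-analytic coefficients, real uniformly bounded roots, admitting a
convergent Puiseux expansion around a zero `k₀`, has only nonnegative integer
exponents in the expansion; hence it is analytic at `k₀` and is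
`O((k-k₀)²)` there. -/
theorem stmt11 (n : ℕ) (a : ℕ → ℝ → ℝ) (ω : ℝ → ℝ) (k₀ : ℝ)
    (hanal : ∀ i k, AnalyticAt ℝ (a i) k)
    (hroot : ∀ k, ω k ^ n + ∑ i ∈ Finset.range n, a i k * ω k ^ i = 0)
    (hreal : ∀ (k : ℝ) (z : ℂ),
      z ^ n + ∑ i ∈ Finset.range n, (a i k : ℂ) * z ^ i = 0 → z.im = 0)
    (hbdd : ∃ B : ℝ, ∀ (k x : ℝ),
      x ^ n + ∑ i ∈ Finset.range n, a i k * x ^ i = 0 → |x| ≤ B)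
    (hcont : Continuous ω)
    (hnonneg : ∀ k, 0 ≤ ω k) (hzero : ω k₀ = 0)
    (q : ℕ) (hq : 0 < q) (m₀ : ℤ) (c : ℤ → ℂ) (δ : ℝ) (hδ : 0 < δ)
    (hsupp : ∀ m : ℤ, m < m₀ → c m = 0)
    (hsum : ∀ k : ℝ, 0 < |k - k₀| → |k - k₀| < δ →
      Summable (fun m : ℤ => c m * ((k - k₀ : ℂ) ^ ((m : ℂ) / q))))
    (hser : ∀ k : ℝ, 0 < |k - k₀| → |k - k₀| < δ →
      (ω k : ℂ) = ∑' m : ℤ, c m * ((k - k₀ : ℂ) ^ ((m : ℂ) / q))) :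
    (∀ m : ℤ, c m ≠ 0 → (q : ℤ) ∣ m ∧ 0 ≤ m) ∧
    AnalyticAt ℝ ω k₀ ∧
    ∃ C > 0, ∃ δ' > 0, ∀ k : ℝ, |k - k₀| < δ' → ω k ≤ C * (k - k₀) ^ 2 := by
  obtain ⟨B, hB⟩ := hbdd
  have hωB : ∀ k, |ω k| ≤ B := fun k => hB k (ω k) (hroot k)
  have hB0 : 0 ≤ B := le_trans (abs_nonneg _) (hωB k₀)
  have hqC : (q : ℂ) ≠ 0 := Nat.cast_ne_zero.2 hq.ne'
  set R : ℝ := δ ^ ((q : ℝ)⁻¹) with hRdef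
  have hR : 0 < R := Real.rpow_pos_of_pos hδ _
  have hsq : ∀ s : ℝ, 0 < s → s < R → 0 < s ^ q ∧ s ^ q < δ := by
    intro s hs hsR
    refine ⟨pow_pos hs q, ?_⟩
    calc s ^ q < R ^ q := pow_lt_pow_left₀ hsR hs.le hq.ne'
      _ = δ := by rw [hRdef]; exact Real.rpow_inv_natCast_pow hδ.le hq.ne'
  set u : ℂ := Complex.exp ((Real.pi : ℂ) * Complex.I / q) with hudef
  -- plus side representation
  have plus : ∀ s : ℝ, 0 < s → s < R →
      Summable (fun m : ℤ => c m * (s : ℂ) ^ m) ∧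
      ((ω (k₀ + s ^ q) : ℂ) = ∑' m : ℤ, c m * (s : ℂ) ^ m) := by
    intro s hs hsR
    obtain ⟨h1, h2⟩ := hsq s hs hsR
    have hk : |k₀ + s ^ q - k₀| = s ^ q := by
      rw [add_sub_cancel_left]; exact abs_of_pos h1
    have habs1 : 0 < |k₀ + s ^ q - k₀| := by rw [hk]; exact h1
    have habs2 : |k₀ + s ^ q - k₀| < δ := by rw [hk]; exact h2
    have hterm : ∀ m : ℤ,
        c m * (((k₀ + s ^ q : ℝ) : ℂ) - (k₀ : ℂ)) ^ ((m : ℂ) / q) = c m * (s : ℂ) ^ m := by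
      intro m
      have hcast : ((k₀ + s ^ q : ℝ) : ℂ) - (k₀ : ℂ) = ((s ^ q : ℝ) : ℂ) := by
        push_cast; ring
      rw [hcast, cpow_pos_eval hs hq m]
    exact ⟨(hsum _ habs1 habs2).congr hterm,
      by rw [hser _ habs1 habs2]; exact tsum_congr hterm⟩
  -- minus side representation
  have minus : ∀ s : ℝ, 0 < s → s < R →
      Summable (fun m : ℤ => (c m * u ^ m) * (s : ℂ) ^ m) ∧
      ((ω (k₀ - s ^ q) : ℂ) = ∑' m : ℤ, (c m * u ^ m) * (s : ℂ) ^ m) := by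
    intro s hs hsR
    obtain ⟨h1, h2⟩ := hsq s hs hsR
    have hk : |k₀ - s ^ q - k₀| = s ^ q := by
      rw [show k₀ - s ^ q - k₀ = -(s ^ q) by ring, abs_neg]; exact abs_of_pos h1
    have habs1 : 0 < |k₀ - s ^ q - k₀| := by rw [hk]; exact h1
    have habs2 : |k₀ - s ^ q - k₀| < δ := by rw [hk]; exact h2
    have hterm : ∀ m : ℤ,
        c m * (((k₀ - s ^ q : ℝ) : ℂ) - (k₀ : ℂ)) ^ ((m : ℂ) / q)
          = (c m * u ^ m) * (s : ℂ) ^ m := by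
      intro m
      have hcast : ((k₀ - s ^ q : ℝ) : ℂ) - (k₀ : ℂ) = ((-(s ^ q) : ℝ) : ℂ) := by
        push_cast; ring
      rw [hcast, cpow_neg_eval hs hq m, ← hudef, mul_assoc]
    exact ⟨(hsum _ habs1 habs2).congr hterm,
      by rw [hser _ habs1 habs2]; exact tsum_congr hterm⟩
  -- negative exponents vanish
  have hc_neg : ∀ m : ℤ, m < 0 → c m = 0 := by
    apply vanish_int c m₀ hsupp hR hB0 0 (fun s hs hsR => (plus s hs hsR).1)
    intro s hs hsR
    rw [← (plus s hs hsR).2, zpow_zero, mul_one, Complex.norm_real, Real.norm_eq_abs]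
    exact hωB _
  have conj_zpow : ∀ (s : ℝ) (m : ℤ), (starRingEnd ℂ) ((s : ℂ) ^ m) = (s : ℂ) ^ m := by
    intro s m
    rw [map_zpow₀, Complex.conj_ofReal]
  -- coefficients are real
  have hc_real : ∀ m : ℤ, (starRingEnd ℂ) (c m) = c m := by
    intro m
    have key := vanish_int (fun j => c j - (starRingEnd ℂ) (c j)) m₀
      (fun j hj => by simp [hsupp j hj]) hR (le_refl (0 : ℝ)) (m + 1)
      (fun s hs hsR => by
        have h1 := (plus s hs hsR).1
        have h2 : Summable fun j : ℤ => (starRingEnd ℂ) (c j) * (s : ℂ) ^ j := by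
          refine (h1.map (starRingEnd ℂ) continuous_conj).congr fun j => ?_
          rw [Function.comp_apply, map_mul, conj_zpow]
        exact (h1.sub h2).congr fun j => by ring)
      (fun s hs hsR => by
        have h1 := (plus s hs hsR).1
        have h2 : Summable fun j : ℤ => (starRingEnd ℂ) (c j) * (s : ℂ) ^ j := by
          refine (h1.map (starRingEnd ℂ) continuous_conj).congr fun j => ?_
          rw [Function.comp_apply, map_mul, conj_zpow]
        have e1 : ∑' j : ℤ, (c j - (starRingEnd ℂ) (c j)) * (s : ℂ) ^ j
            = (∑' j : ℤ, c j * (s : ℂ) ^ j)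
              - ∑' j : ℤ, (starRingEnd ℂ) (c j) * (s : ℂ) ^ j := by
          rw [← Summable.tsum_sub h1 h2]
          exact tsum_congr fun j => by ring
        have e2 : ∑' j : ℤ, (starRingEnd ℂ) (c j) * (s : ℂ) ^ j
            = (starRingEnd ℂ) (∑' j : ℤ, c j * (s : ℂ) ^ j) := by
          rw [Complex.conj_tsum]
          exact tsum_congr fun j => by rw [map_mul, conj_zpow]
        have e3 : (starRingEnd ℂ) (∑' j : ℤ, c j * (s : ℂ) ^ j)
            = ∑' j : ℤ, c j * (s : ℂ) ^ j := by
          rw [← (plus s hs hsR).2, Complex.conj_ofReal]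
        rw [e1, e2, e3, sub_self, norm_zero, zero_mul])
      m (by omega)
    exact (sub_eq_zero.1 key).symm
  -- twisted coefficients are conj-invariant
  have hc_real2 : ∀ m : ℤ, (starRingEnd ℂ) (c m * u ^ m) = c m * u ^ m := by
    intro m
    have key := vanish_int (fun j => c j * u ^ j - (starRingEnd ℂ) (c j * u ^ j)) m₀
      (fun j hj => by simp [hsupp j hj]) hR (le_refl (0 : ℝ)) (m + 1)
      (fun s hs hsR => by
        have h1 := (minus s hs hsR).1
        have h2 : Summable fun j : ℤ => (starRingEnd ℂ) (c j * u ^ j) * (s : ℂ) ^ j := by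
          refine (h1.map (starRingEnd ℂ) continuous_conj).congr fun j => ?_
          rw [Function.comp_apply, map_mul, conj_zpow]
        exact (h1.sub h2).congr fun j => by ring)
      (fun s hs hsR => by
        have h1 := (minus s hs hsR).1
        have h2 : Summable fun j : ℤ => (starRingEnd ℂ) (c j * u ^ j) * (s : ℂ) ^ j := by
          refine (h1.map (starRingEnd ℂ) continuous_conj).congr fun j => ?_
          rw [Function.comp_apply, map_mul, conj_zpow]
        have e1 : ∑' j : ℤ, (c j * u ^ j - (starRingEnd ℂ) (c j * u ^ j)) * (s : ℂ) ^ j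
            = (∑' j : ℤ, (c j * u ^ j) * (s : ℂ) ^ j)
              - ∑' j : ℤ, (starRingEnd ℂ) (c j * u ^ j) * (s : ℂ) ^ j := by
          rw [← Summable.tsum_sub h1 h2]
          exact tsum_congr fun j => by ring
        have e2 : ∑' j : ℤ, (starRingEnd ℂ) (c j * u ^ j) * (s : ℂ) ^ j
            = (starRingEnd ℂ) (∑' j : ℤ, (c j * u ^ j) * (s : ℂ) ^ j) := by
          rw [Complex.conj_tsum]
          exact tsum_congr fun j => by
            rw [map_mul (starRingEnd ℂ) (c j * u ^ j) ((s : ℂ) ^ j), conj_zpow]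
        have e3 : (starRingEnd ℂ) (∑' j : ℤ, (c j * u ^ j) * (s : ℂ) ^ j)
            = ∑' j : ℤ, (c j * u ^ j) * (s : ℂ) ^ j := by
          rw [← (minus s hs hsR).2, Complex.conj_ofReal]
        rw [e1, e2, e3, sub_self, norm_zero, zero_mul])
      m (by omega)
    exact (sub_eq_zero.1 key).symm
  -- Part 1
  have part1 : ∀ m : ℤ, c m ≠ 0 → (q : ℤ) ∣ m ∧ 0 ≤ m := by
    intro m hc
    have h0m : 0 ≤ m := le_of_not_gt fun h => hc (hc_neg m h)
    refine ⟨?_, h0m⟩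
    have h2 := hc_real2 m
    rw [map_mul, hc_real m, map_zpow₀] at h2
    have hcu : (starRingEnd ℂ) u = Complex.exp (-((Real.pi : ℂ) * Complex.I / q)) := by
      rw [hudef, ← Complex.exp_conj]
      congr 1
      simp [map_div₀, Complex.conj_I, Complex.conj_ofReal]
      ring
    rw [hcu] at h2
    have h3 : (Complex.exp (-((Real.pi : ℂ) * Complex.I / q))) ^ m
        = (Complex.exp ((Real.pi : ℂ) * Complex.I / q)) ^ m :=
      mul_left_cancel₀ hc h2
    exact exp_pow_eq_iff hq m h3.symm
  -- real coefficients of the integral power series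
  set g : ℕ → ℝ := fun j => (c ((q : ℤ) * j)).re with hgdef
  have hcg : ∀ j : ℕ, c ((q : ℤ) * j) = ((g j : ℝ) : ℂ) :=
    fun j => (Complex.conj_eq_iff_re.1 (hc_real _)).symm
  have hinj : Function.Injective (fun j : ℕ => (q : ℤ) * j) := by
    intro a b h
    simp only at h
    have hqZ : (q : ℤ) ≠ 0 := by exact_mod_cast hq.ne'
    have : (a : ℤ) = b := mul_left_cancel₀ hqZ h
    exact_mod_cast this
  -- two-sided representation as a power series in (k - k₀)
  have hrep : ∀ t : ℝ, 0 < |t| → |t| < δ →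
      (Summable fun j : ℕ => g j * t ^ j) ∧ ω (k₀ + t) = ∑' j : ℕ, g j * t ^ j := by
    intro t ht hδt
    have hk : |k₀ + t - k₀| = |t| := by rw [add_sub_cancel_left]
    have hsum0 := hsum (k₀ + t) (by rwa [hk]) (by rwa [hk])
    have hser0 := hser (k₀ + t) (by rwa [hk]) (by rwa [hk])
    have hcast : ((k₀ + t : ℝ) : ℂ) - (k₀ : ℂ) = (t : ℂ) := by push_cast; ring
    set F : ℤ → ℂ := fun m => c m * (t : ℂ) ^ ((m : ℂ) / q) with hFdef
    have hterm0 : ∀ m : ℤ,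
        c m * (((k₀ + t : ℝ) : ℂ) - (k₀ : ℂ)) ^ ((m : ℂ) / q) = F m := by
      intro m; rw [hFdef, hcast]
    have hFsum : Summable F := hsum0.congr hterm0
    have hFsupp : Function.support F ⊆ Set.range (fun j : ℕ => (q : ℤ) * j) := by
      intro m hm
      have hcm : c m ≠ 0 := by
        intro h
        apply hm
        simp [hFdef, h]
      obtain ⟨⟨j, hj⟩, h0⟩ := part1 m hcm
      have hj0 : 0 ≤ j := by
        by_contra hneg
        push_neg at hneg
        have hqZ : (0 : ℤ) < q := by exact_mod_cast hq
        have : (q : ℤ) * j < 0 := mul_neg_of_pos_of_neg hqZ hneg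
        omega
      exact ⟨j.toNat, by simp only []; rw [Int.toNat_of_nonneg hj0]; omega⟩
    have hvan : ∀ m ∉ Set.range (fun j : ℕ => (q : ℤ) * j), F m = 0 := by
      intro m hm
      by_contra hne
      exact hm (hFsupp hne)
    have hterm : ∀ j : ℕ, F ((q : ℤ) * j) = ((g j * t ^ j : ℝ) : ℂ) := by
      intro j
      have h1 : ((((q : ℤ) * j : ℤ) : ℂ) / q) = ((j : ℕ) : ℂ) := by
        push_cast
        rw [mul_comm, mul_div_assoc, div_self hqC, mul_one]
      show c ((q : ℤ) * j) * (t : ℂ) ^ ((((q : ℤ) * j : ℤ) : ℂ) / q) = _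
      rw [h1, Complex.cpow_natCast, hcg j]
      push_cast
      ring
    have hsum1 : Summable (F ∘ fun j : ℕ => (q : ℤ) * j) :=
      (hinj.summable_iff hvan).2 hFsum
    have hsum2 : Summable fun j : ℕ => g j * t ^ j := by
      rw [← Complex.summable_ofReal]
      exact hsum1.congr hterm
    refine ⟨hsum2, ?_⟩
    have h5 : (ω (k₀ + t) : ℂ) = ((∑' j : ℕ, g j * t ^ j : ℝ) : ℂ) := by
      rw [hser0, tsum_congr hterm0, ← hinj.tsum_eq hFsupp, tsum_congr hterm,
        ← Complex.ofReal_tsum]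
    exact_mod_cast h5
  -- absolute summability at δ/2
  have hδ2 : (0 : ℝ) < δ / 2 := by positivity
  have habs : Summable fun j : ℕ => |g j| * (δ / 2) ^ j := by
    have h1 := (hrep (δ / 2) (by rw [abs_of_pos hδ2]; exact hδ2)
      (by rw [abs_of_pos hδ2]; linarith)).1
    refine (summable_abs_iff.2 h1).congr fun j => ?_
    rw [abs_mul, _root_.abs_pow, abs_of_pos hδ2]
  obtain ⟨C, hC0, hC⟩ := head2 g hδ2 habs
  -- g 0 = 0
  have hg0 : g 0 = 0 := by
    have hlim : Filter.Tendsto (fun t : ℝ => |ω (k₀ + t)| + (|g 1| + C) * t)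
        (nhdsWithin 0 (Set.Ioi 0)) (nhds 0) := by
      have l1 : Filter.Tendsto (fun t : ℝ => |ω (k₀ + t)|) (nhds 0) (nhds (0 : ℝ)) := by
        have lc : Continuous fun t : ℝ => |ω (k₀ + t)| :=
          continuous_abs.comp (hcont.comp (continuous_const.add continuous_id))
        have h := lc.tendsto 0
        simpa [hzero] using h
      have l2 : Filter.Tendsto (fun t : ℝ => (|g 1| + C) * t) (nhds 0) (nhds (0 : ℝ)) := by
        have hcm : Continuous fun t : ℝ => (|g 1| + C) * t :=
          continuous_const.mul continuous_id
        have h := hcm.tendsto (0 : ℝ)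
        simpa using h
      have h := l1.add l2
      simp only [add_zero] at h
      exact h.mono_left nhdsWithin_le_nhds
    have hev : ∀ᶠ t in nhdsWithin (0 : ℝ) (Set.Ioi 0),
        |g 0| ≤ |ω (k₀ + t)| + (|g 1| + C) * t := by
      filter_upwards [Ioo_mem_nhdsGT_of_mem
        (Set.mem_Ico.2 ⟨le_refl (0 : ℝ), lt_min hδ2 one_pos⟩)] with t htm
      obtain ⟨ht, htm'⟩ := htm
      have ht2 : t < δ / 2 := lt_of_lt_of_le htm' (min_le_left _ _)
      have ht1 : t ≤ 1 := le_trans htm'.le (min_le_right _ _)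
      have habs_t : |t| = t := abs_of_pos ht
      have hrept := (hrep t (by rw [habs_t]; exact ht) (by rw [habs_t]; linarith)).2
      have hCt := hC t (by rw [habs_t]; linarith)
      rw [← hrept] at hCt
      have htt : t ^ 2 ≤ t := by nlinarith
      obtain ⟨hE1, hE2⟩ := abs_le.1 hCt
      have p1 : g 1 * t ≤ |g 1| * t := mul_le_mul_of_nonneg_right (le_abs_self _) ht.le
      have p2 : -(|g 1| * t) ≤ g 1 * t := by
        have := mul_le_mul_of_nonneg_right (neg_abs_le (g 1)) ht.le
        linarith
      have p3 : C * t ^ 2 ≤ C * t := mul_le_mul_of_nonneg_left htt hC0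
      have pw1 := le_abs_self (ω (k₀ + t))
      have pw2 := neg_abs_le (ω (k₀ + t))
      have h9 : |g 0| ≤ |ω (k₀ + t)| + |g 1| * t + C * t :=
        abs_le.2 ⟨by linarith, by linarith⟩
      calc |g 0| ≤ |ω (k₀ + t)| + |g 1| * t + C * t := h9
        _ = |ω (k₀ + t)| + (|g 1| + C) * t := by ring
    have h10 := ge_of_tendsto hlim hev
    exact abs_nonpos_iff.1 h10
  -- g 1 = 0
  have hg1 : g 1 = 0 := by
    have hup : -(g 1) ≤ 0 := by
      apply le_zero_of_le_mul hδ2 hC0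
      intro t ht htm
      have habs_t : |t| = t := abs_of_pos ht
      have hrept := (hrep t (by rw [habs_t]; exact ht) (by rw [habs_t]; linarith)).2
      have hCt := hC t (by rw [habs_t]; linarith)
      rw [← hrept, hg0] at hCt
      obtain ⟨hE1, hE2⟩ := abs_le.1 hCt
      have hω := hnonneg (k₀ + t)
      have h11 : -(g 1) * t ≤ (C * t) * t := by nlinarith
      exact le_of_mul_le_mul_right h11 ht
    have hdown : g 1 ≤ 0 := by
      apply le_zero_of_le_mul hδ2 hC0
      intro t ht htm
      have habs_t : |(-t)| = t := by rw [abs_neg, abs_of_pos ht]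
      have hrept := (hrep (-t) (by rw [habs_t]; exact ht) (by rw [habs_t]; linarith)).2
      have hCt := hC (-t) (by rw [habs_t]; linarith)
      rw [← hrept, hg0] at hCt
      obtain ⟨hE1, hE2⟩ := abs_le.1 hCt
      have hω := hnonneg (k₀ + -t)
      have h11 : g 1 * t ≤ (C * t) * t := by nlinarith
      exact le_of_mul_le_mul_right h11 ht
    linarith
  -- analyticity
  have hana : AnalyticAt ℝ ω k₀ := by
    set p : FormalMultilinearSeries ℝ ℝ ℝ := FormalMultilinearSeries.ofScalars ℝ g with hpdef
    have hprad : ((δ / 2 : ℝ).toNNReal : ENNReal) ≤ p.radius := by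
      apply p.le_radius_of_summable_norm
      refine habs.congr fun j => ?_
      rw [hpdef, FormalMultilinearSeries.ofScalars_norm, Real.norm_eq_abs,
        Real.coe_toNNReal _ hδ2.le]
    have hppos : 0 < p.radius :=
      lt_of_lt_of_le (by exact_mod_cast Real.toNNReal_pos.2 hδ2) hprad
    have hball := p.hasFPowerSeriesOnBall hppos
    have hana0 : AnalyticAt ℝ p.sum 0 := hball.analyticAt
    have hsub : AnalyticAt ℝ (fun k : ℝ => k - k₀) k₀ := analyticAt_id.sub analyticAt_const
    have hana1 : AnalyticAt ℝ (p.sum ∘ fun k : ℝ => k - k₀) k₀ := by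
      apply AnalyticAt.comp _ hsub
      simpa using hana0
    apply hana1.congr
    have hpsum : ∀ y : ℝ, p.sum y = ∑' j : ℕ, g j * y ^ j := by
      intro y
      apply tsum_congr
      intro j
      rw [hpdef, FormalMultilinearSeries.ofScalars_apply_eq, smul_eq_mul]
    filter_upwards [Metric.ball_mem_nhds k₀ hδ] with k hk
    rw [Metric.mem_ball, Real.dist_eq] at hk
    rcases eq_or_ne k k₀ with hkk | hkk
    · subst hkk
      rw [Function.comp_apply, hpsum, sub_self, hzero]
      rw [tsum_eq_single 0 (fun j hj => by rw [zero_pow hj, mul_zero])]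
      simp [hg0]
    · have htne : 0 < |k - k₀| := abs_pos.2 (sub_ne_zero.2 hkk)
      have hrept := (hrep (k - k₀) htne hk).2
      rw [Function.comp_apply, hpsum]
      rw [show k₀ + (k - k₀) = k by ring] at hrept
      exact hrept.symm
  refine ⟨part1, hana, C + 1, by positivity, δ / 2, hδ2, ?_⟩
  intro k hk
  rcases eq_or_ne k k₀ with hkk | hkk
  · subst hkk
    simp [hzero]
  · have htne : 0 < |k - k₀| := abs_pos.2 (sub_ne_zero.2 hkk)
    have hCt := hC (k - k₀) hk.le
    have hrept := (hrep (k - k₀) htne (by linarith)).2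
    rw [show k₀ + (k - k₀) = k by ring] at hrept
    rw [← hrept, hg0, hg1] at hCt
    simp only [zero_mul, sub_zero] at hCt
    have h12 := (abs_le.1 hCt).2
    have h13 : (0 : ℝ) ≤ (k - k₀) ^ 2 := sq_nonneg _
    calc ω k ≤ |ω k| := le_abs_self _
      _ ≤ C * (k - k₀) ^ 2 := by rwa [abs_le] at hCt ⊢ <;> exact hCt.2
      _ ≤ (C + 1) * (k - k₀) ^ 2 := by nlinarith
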